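/- Let e ≥ 3 be odd and let ω = 2^(1/e) in the ring O = Z_2[2^(1/e)]. Then 7 = 1 + ω^e + ω^(2e) cannot be written as the sum of three squares of elements of O. -/

import Mathlib

open Polynomial

/-- The ring `ℤ_2[2^(1/e)]`, realized as `ℤ_[2][X]/(Xᵉ - 2)`. -/
noncomputable abbrev Z2RootTwo (e : ℕ) : Type := AdjoinRoot ((X : ℤ_[2][X]) ^ e - C 2)

namespace SevenAux
open Finset







def hs {R : Type*} [CommRing R] (g : ℕ → R) (n : ℕ) : R :=
  ∑ i ∈ range ((n+1)/2), g i * g (n - i)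

def cv {R : Type*} [CommRing R] (g : ℕ → R) (n : ℕ) : R :=
  ∑ i ∈ range (n+1), g i * g (n - i)

lemma cv_eq_coeff {R : Type*} [CommRing R] (P : R[X]) (n : ℕ) :
    (P * P).coeff n = cv (fun i => P.coeff i) n := by
  rw [Polynomial.coeff_mul, Finset.Nat.sum_antidiagonal_eq_sum_range_succ_mk]
  rfl

lemma cv_split {R : Type*} [CommRing R] (g : ℕ → R) (n : ℕ) :
    cv g n = (∑ i ∈ range ((n+1)/2), g i * g (n - i))
      + ∑ i ∈ range (n + 1 - (n+1)/2), g (n - i) * g (n - (n - i)) := by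
  have h1 : (n+1)/2 ≤ n + 1 := by omega
  rw [cv, range_eq_Ico, ← Finset.sum_Ico_consecutive _ (Nat.zero_le _) h1]
  congr 1
  · rw [range_eq_Ico]
  have h2 := Finset.sum_Ico_reflect (fun j => g j * g (n - j)) 0
    (show n + 1 - (n+1)/2 ≤ n + 1 by omega)
  have h3 : n + 1 - (n + 1 - (n+1)/2) = (n+1)/2 := by omega
  rw [h3, Nat.sub_zero] at h2
  simpa using h2.symm

lemma cv_odd {R : Type*} [CommRing R] (g : ℕ → R) (n : ℕ) (hn : Odd n) :
    cv g n = 2 * hs g n := by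
  obtain ⟨u, hu⟩ := hn
  rw [cv_split, hs, two_mul]
  congr 1
  have h4 : n + 1 - (n+1)/2 = (n+1)/2 := by omega
  rw [h4]
  apply Finset.sum_congr rfl
  intro i hi
  simp only [mem_range] at hi
  have : n - (n - i) = i := by omega
  rw [this, mul_comm]

lemma cv_even {R : Type*} [CommRing R] (g : ℕ → R) (u : ℕ) :
    cv g (2*u) = g u ^ 2 + 2 * hs g (2*u) := by
  have h4 : 2*u + 1 - (2*u+1)/2 = u + 1 := by omega
  have h5 : (2*u+1)/2 = u := by omega
  rw [cv_split, hs, h4, h5, Finset.sum_range_succ]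
  have h6 : ∀ i ∈ range u, g (2*u - i) * g (2*u - (2*u - i)) = g i * g (2*u - i) := by
    intro i hi
    simp only [mem_range] at hi
    have : 2*u - (2*u - i) = i := by omega
    rw [this, mul_comm]
  rw [Finset.sum_congr rfl h6]
  have h7 : 2*u - u = u := by omega
  simp only [h7]
  ring

/-- support vanishing for the convolution -/
lemma cv_eq_zero {R : Type*} [CommRing R] (g : ℕ → R) (e n : ℕ)
    (hg : ∀ i, e ≤ i → g i = 0) (hn : 2*e - 1 ≤ n) : cv g n = 0 := by
  apply Finset.sum_eq_zero
  intro i hi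
  simp only [mem_range] at hi
  by_cases h : e ≤ i
  · rw [hg i h, zero_mul]
  · have : e ≤ n - i := by omega
    rw [hg _ this, mul_zero]






/-- cast `ZMod 8 → ZMod 2` -/
def c2 : ZMod 8 →+* ZMod 2 := ZMod.castHom (show 2 ∣ 8 by norm_num) (ZMod 2)

lemma c2_two_mul_eq_zero (u : ZMod 8) (h : 2*u = 0) : c2 u = 0 := by revert u; decide

lemma c2_sq (x : ZMod 8) : c2 (x^2) = c2 x := by revert x; decide

lemma c2_two (t : ZMod 8) : c2 (2 * t) = 0 := by revert t; decide

lemma lemCA (x y z w : ZMod 8) (h : x^2+y^2+z^2+2*w = 0) :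
    c2 x + c2 y + c2 z = 0 := by revert x y z w; decide

lemma lemCC (x y z w : ZMod 8) (h : x^2+y^2+z^2+2*w = 0) (hw : c2 w = 0) :
    c2 x = 0 ∧ c2 y = 0 ∧ c2 z = 0 := by revert x y z w; decide

lemma lemC0 (x y z H : ZMod 8) (h : x^2+y^2+z^2+4*H = 7) :
    c2 x = 1 ∧ c2 y = 1 ∧ c2 z = 1 ∧ c2 H = 1 := by revert x y z H; decide







theorem combo (e : ℕ) (he2 : Odd e) (he : 3 ≤ e)
    (A B C : ℕ → ZMod 2)
    (hsupp : ∀ i, e ≤ i → A i = 0 ∧ B i = 0 ∧ C i = 0)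
    (h0 : A 0 = 1 ∧ B 0 = 1 ∧ C 0 = 1)
    (hA : ∀ n, 0 < n → 2*n < e → A n + B n + C n = 0)
    (hB : ∀ r, Odd r → 0 < r → r < e →
       (hs A r + hs B r + hs C r) + (A ((r+e)/2) + B ((r+e)/2) + C ((r+e)/2)) = 0)
    (hC : ∀ m, 0 < m → 2*m < e →
       hs A (2*m) + hs B (2*m) + hs C (2*m) = 0 → A m = 0 ∧ B m = 0 ∧ C m = 0)
    (hQ : hs A e + hs B e + hs C e = 1) : False := by
  obtain ⟨k, hk⟩ := he2
  -- main claim by strong induction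
  have main : ∀ m, 0 < m → 2*m < e → A m = 0 ∧ B m = 0 ∧ C m = 0 := by
    intro m
    induction m using Nat.strong_induction_on with
    | _ m IH =>
      intro hm0 hme
      -- sub-claim
      have sub : ∀ n, 0 < n → n < e → 2*n ≤ e + 2*m → A n + B n + C n = 0 := by
        intro n
        induction n using Nat.strong_induction_on with
        | _ n IHn =>
          intro hn0 hne hnm
          by_cases hcase : 2*n < e
          · exact hA n hn0 hcase
          · -- 2*n > e since e odd
            have hgt : e < 2*n := by omega
            set r := 2*n - e with hr
            have hrodd : Odd r := ⟨n - k - 1, by omega⟩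
            have hr0 : 0 < r := by omega
            have hrlt : r < e := by omega
            have hhalf : ∀ g : ℕ → ZMod 2, g 0 = 1 →
                (∀ i, 0 < i → i < m → g i = 0) → hs g r = g r := by
              intro g hg0 hgz
              have hsplit : (r+1)/2 = ((r+1)/2 - 1) + 1 := by omega
              rw [hs, hsplit, Finset.sum_range_succ']
              have hz : ∀ i ∈ range ((r+1)/2 - 1), g (i+1) * g (r - (i+1)) = 0 := by
                intro i hi
                simp only [mem_range] at hi
                have h1 : 0 < i + 1 := by omega
                have h2 : i + 1 < m := by omega
                rw [hgz _ h1 h2, zero_mul]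
              rw [Finset.sum_eq_zero hz, hg0, Nat.sub_zero, zero_add, one_mul]
            have hAz : ∀ i, 0 < i → i < m → A i = 0 := fun i h1 h2 =>
              (IH i h2 h1 (by omega)).1
            have hBz : ∀ i, 0 < i → i < m → B i = 0 := fun i h1 h2 =>
              (IH i h2 h1 (by omega)).2.1
            have hCz : ∀ i, 0 < i → i < m → C i = 0 := fun i h1 h2 =>
              (IH i h2 h1 (by omega)).2.2
            have hBr := hB r hrodd hr0 hrlt
            rw [hhalf A h0.1 hAz, hhalf B h0.2.1 hBz, hhalf C h0.2.2 hCz] at hBr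
            have hre : (r + e)/2 = n := by omega
            rw [hre] at hBr
            have hsub : A r + B r + C r = 0 := IHn r (by omega) hr0 hrlt (by omega)
            rw [hsub, zero_add] at hBr
            exact hBr
      -- now prove the step
      apply hC m hm0 hme
      have hhalf2 : ∀ g : ℕ → ZMod 2, g 0 = 1 →
          (∀ i, 0 < i → i < m → g i = 0) → hs g (2*m) = g (2*m) := by
        intro g hg0 hgz
        have hsplit : (2*m+1)/2 = (m - 1) + 1 := by omega
        rw [hs, hsplit, Finset.sum_range_succ']
        have hz : ∀ i ∈ range (m - 1), g (i+1) * g (2*m - (i+1)) = 0 := by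
          intro i hi
          simp only [mem_range] at hi
          rw [hgz (i+1) (by omega) (by omega), zero_mul]
        rw [Finset.sum_eq_zero hz, hg0, Nat.sub_zero, zero_add, one_mul]
      have hAz : ∀ i, 0 < i → i < m → A i = 0 := fun i h1 h2 =>
        (IH i h2 h1 (by omega)).1
      have hBz : ∀ i, 0 < i → i < m → B i = 0 := fun i h1 h2 =>
        (IH i h2 h1 (by omega)).2.1
      have hCz : ∀ i, 0 < i → i < m → C i = 0 := fun i h1 h2 =>
        (IH i h2 h1 (by omega)).2.2
      rw [hhalf2 A h0.1 hAz, hhalf2 B h0.2.1 hBz, hhalf2 C h0.2.2 hCz]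
      exact sub (2*m) (by omega) (by omega) (by omega)
  -- conclude with hQ
  have hfin : ∀ g : ℕ → ZMod 2, (∀ i, e ≤ i → g i = 0) →
      (∀ i, 0 < i → 2*i < e → g i = 0) → hs g e = 0 := by
    intro g hgs hgz
    apply Finset.sum_eq_zero
    intro i hi
    simp only [mem_range] at hi
    by_cases h : i = 0
    · subst h; rw [Nat.sub_zero, hgs e le_rfl, mul_zero]
    · rw [hgz i (by omega) (by omega), zero_mul]
  rw [hfin A (fun i h => (hsupp i h).1) (fun i h1 h2 => (main i h1 h2).1),
      hfin B (fun i h => (hsupp i h).2.1) (fun i h1 h2 => (main i h1 h2).2.1),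
      hfin C (fun i h => (hsupp i h).2.2) (fun i h1 h2 => (main i h1 h2).2.2)] at hQ
  simp at hQ





lemma c2_hs (g : ℕ → ZMod 8) (n : ℕ) : c2 (hs g n) = hs (fun i => c2 (g i)) n := by
  simp [hs, map_sum, map_mul]

lemma rep {e : ℕ} (he : e ≠ 0) (x : AdjoinRoot ((X : ℤ_[2][X])^e - C 2)) :
    ∃ P : ℤ_[2][X], AdjoinRoot.mk _ P = x ∧ P.degree < (e : WithBot ℕ) := by
  obtain ⟨Q, hQ⟩ := AdjoinRoot.mk_surjective x
  refine ⟨Q %ₘ ((X : ℤ_[2][X])^e - C 2), ?_, ?_⟩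
  · conv_rhs => rw [← hQ]
    rw [Polynomial.modByMonic_eq_sub_mul_div _ _]
    rw [map_sub, map_mul, AdjoinRoot.mk_self, zero_mul, sub_zero]
  · have h := Polynomial.degree_modByMonic_lt Q (monic_X_pow_sub_C (2 : ℤ_[2]) he)
    rwa [degree_X_pow_sub_C (by omega) ] at h


end SevenAux

open SevenAux in
/-- For odd `e ≥ 3`, the element `7 = 1 + ωᵉ + ω^(2e)` of `ℤ_2[2^(1/e)]`
is not a sum of three squares. -/
theorem seven_not_sum_three_squares (e : ℕ) (he2 : Odd e) (he : 3 ≤ e) :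
    ¬ ∃ x y z : Z2RootTwo e, x ^ 2 + y ^ 2 + z ^ 2 = 7 := by
  rintro ⟨x, y, z, hxyz⟩
  have he0 : e ≠ 0 := by omega
  obtain ⟨ke, hke⟩ := he2
  obtain ⟨P, hP, hPd⟩ := SevenAux.rep he0 x
  obtain ⟨Q, hQ, hQd⟩ := SevenAux.rep he0 y
  obtain ⟨R, hR, hRd⟩ := SevenAux.rep he0 z
  have hdvd : ((X : ℤ_[2][X])^e - C 2) ∣ (P^2 + Q^2 + R^2 - 7) := by
    rw [← AdjoinRoot.mk_eq_zero]
    simp only [map_sub, map_add, map_pow, map_ofNat, hP, hQ, hR, hxyz, sub_self]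
  obtain ⟨T, hT⟩ := hdvd
  -- push to ZMod 8
  set ψ : ℤ_[2] →+* ZMod 8 :=
    (ZMod.castHom (show (8:ℕ) ∣ 2^3 by norm_num) (ZMod 8)).comp (PadicInt.toZModPow 3) with hψ
  set pa := P.map ψ with hpa
  set pb := Q.map ψ with hpb
  set pc := R.map ψ with hpc
  set pt := T.map ψ with hpt
  have hmap : pa*pa + pb*pb + pc*pc - 7 = ((X : (ZMod 8)[X])^e - C 2) * pt := by
    have h := congrArg (Polynomial.map ψ) hT
    simp only [Polynomial.map_sub, Polynomial.map_add, Polynomial.map_pow,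
      Polynomial.map_mul, Polynomial.map_ofNat, Polynomial.map_X, Polynomial.map_C,
      map_ofNat] at h
    rw [hpa, hpb, hpc, hpt, ← pow_two, ← pow_two, ← pow_two]
    exact h
  -- coefficient functions
  set a : ℕ → ZMod 8 := fun i => pa.coeff i with hadef
  set b : ℕ → ZMod 8 := fun i => pb.coeff i with hbdef
  set c : ℕ → ZMod 8 := fun i => pc.coeff i with hcdef
  have hsupp : ∀ (W : ℤ_[2][X]), W.degree < (e : WithBot ℕ) →
      ∀ i, e ≤ i → (W.map ψ).coeff i = 0 := by
    intro W hW i hi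
    apply Polynomial.coeff_eq_zero_of_degree_lt
    calc (W.map ψ).degree ≤ W.degree := Polynomial.degree_map_le
      _ < (e : WithBot ℕ) := hW
      _ ≤ (i : WithBot ℕ) := by exact_mod_cast hi
  have ha : ∀ i, e ≤ i → a i = 0 := fun i hi => hsupp P hPd i hi
  have hb : ∀ i, e ≤ i → b i = 0 := fun i hi => hsupp Q hQd i hi
  have hc : ∀ i, e ≤ i → c i = 0 := fun i hi => hsupp R hRd i hi
  have h8 : (8 : ZMod 8) = 0 := by decide
  -- coefficient identity
  have hcoeff : ∀ k : ℕ, cv a k + cv b k + cv c k - (if k = 0 then (7:ZMod 8) else 0)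
      = (if e ≤ k then pt.coeff (k-e) else 0) - 2 * pt.coeff k := by
    intro k
    have h1 := congrArg (fun q => Polynomial.coeff q k) hmap
    simp only [coeff_sub, coeff_add] at h1
    rw [cv_eq_coeff, cv_eq_coeff, cv_eq_coeff] at h1
    rw [show ((X : (ZMod 8)[X])^e - C 2) * pt = pt * X^e - C 2 * pt by ring] at h1
    rw [coeff_sub, Polynomial.coeff_mul_X_pow', Polynomial.coeff_C_mul] at h1
    rw [show (7 : (ZMod 8)[X]) = C 7 from (map_ofNat C 7).symm, coeff_C] at h1
    exact h1
  -- the F equations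
  have hF : ∀ n : ℕ, n < e →
      (cv a n + cv b n + cv c n) + 2 * (cv a (n+e) + cv b (n+e) + cv c (n+e))
        = (if n = 0 then (7:ZMod 8) else 0) := by
    intro n hn
    have e1 := hcoeff n
    have e2 := hcoeff (n+e)
    have e3 := hcoeff (n+2*e)
    rw [if_neg (show ¬ e ≤ n by omega)] at e1
    rw [if_pos (show e ≤ n+e by omega), if_neg (show ¬ n+e = 0 by omega),
      show n+e-e = n by omega] at e2
    rw [if_pos (show e ≤ n+2*e by omega), if_neg (show ¬ n+2*e = 0 by omega),
      show n+2*e-e = n+e by omega] at e3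
    have z1 : cv a (n+2*e) = 0 := cv_eq_zero a e _ ha (by omega)
    have z2 : cv b (n+2*e) = 0 := cv_eq_zero b e _ hb (by omega)
    have z3 : cv c (n+2*e) = 0 := cv_eq_zero c e _ hc (by omega)
    rw [z1, z2, z3] at e3
    linear_combination e1 + 2 * e2 + 4 * e3 - pt.coeff (n+2*e) * h8
  -- parities
  set A : ℕ → ZMod 2 := fun i => c2 (a i) with hA2
  set B : ℕ → ZMod 2 := fun i => c2 (b i) with hB2
  set C' : ℕ → ZMod 2 := fun i => c2 (c i) with hC2
  -- F(0) : units and hQ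
  have hF0 := hF 0 (by omega)
  rw [if_pos rfl] at hF0
  simp only [zero_add] at hF0
  have hcv0 : ∀ g : ℕ → ZMod 8, cv g 0 = g 0 * g 0 := by
    intro g; rw [cv]; simp
  have hcve : ∀ g : ℕ → ZMod 8, cv g e = 2 * hs g e :=
    fun g => cv_odd g e ⟨ke, hke⟩
  rw [hcv0 a, hcv0 b, hcv0 c, hcve a, hcve b, hcve c] at hF0
  have hF0' : (a 0)^2 + (b 0)^2 + (c 0)^2 + 4 * (hs a e + hs b e + hs c e) = 7 := by
    linear_combination hF0
  obtain ⟨ha0, hb0, hc0, hHodd⟩ := lemC0 _ _ _ _ hF0'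
  have hQ2 : hs A e + hs B e + hs C' e = 1 := by
    have := hHodd
    rw [map_add, map_add, c2_hs, c2_hs, c2_hs] at this
    exact this
  -- even case decomposition helper
  have heven : ∀ n : ℕ, 0 < n → 2*n < e →
      (a n)^2 + (b n)^2 + (c n)^2
        + 2 * ((hs a (2*n) + hs b (2*n) + hs c (2*n))
            + 2 * (hs a (2*n+e) + hs b (2*n+e) + hs c (2*n+e))) = 0 := by
    intro n hn0 hne
    have hFe := hF (2*n) (by omega)
    rw [if_neg (by omega)] at hFe
    rw [cv_even a n, cv_even b n, cv_even c n] at hFe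
    have hodd : Odd (2*n+e) := ⟨n + ke, by omega⟩
    rw [cv_odd a _ hodd, cv_odd b _ hodd, cv_odd c _ hodd] at hFe
    linear_combination hFe
  -- hA
  have hAeq : ∀ n, 0 < n → 2*n < e → A n + B n + C' n = 0 := by
    intro n hn0 hne
    exact lemCA _ _ _ _ (heven n hn0 hne)
  -- hC
  have hCeq : ∀ m, 0 < m → 2*m < e →
      hs A (2*m) + hs B (2*m) + hs C' (2*m) = 0 → A m = 0 ∧ B m = 0 ∧ C' m = 0 := by
    intro m hm0 hme hhs
    apply lemCC _ _ _ _ (heven m hm0 hme)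
    rw [map_add, c2_two, add_zero, map_add, map_add, c2_hs, c2_hs, c2_hs]
    exact hhs
  -- hB
  have hBeq : ∀ r, Odd r → 0 < r → r < e →
      (hs A r + hs B r + hs C' r) + (A ((r+e)/2) + B ((r+e)/2) + C' ((r+e)/2)) = 0 := by
    intro r hrodd hr0 hre
    obtain ⟨kr, hkr⟩ := hrodd
    have hFr := hF r (by omega)
    rw [if_neg (by omega)] at hFr
    rw [cv_odd a r ⟨kr, hkr⟩, cv_odd b r ⟨kr, hkr⟩, cv_odd c r ⟨kr, hkr⟩] at hFr
    set n := (r+e)/2 with hn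
    have hrn : r + e = 2*n := by omega
    rw [hrn, cv_even a n, cv_even b n, cv_even c n] at hFr
    have h2u : 2 * ((hs a r + hs b r + hs c r) + ((a n)^2 + (b n)^2 + (c n)^2)
        + 2 * (hs a (2*n) + hs b (2*n) + hs c (2*n))) = 0 := by
      linear_combination hFr
    have := c2_two_mul_eq_zero _ h2u
    rw [map_add, map_add, c2_two, add_zero, map_add, map_add, c2_hs, c2_hs, c2_hs,
      map_add, map_add, c2_sq, c2_sq, c2_sq] at this
    linear_combination this
  -- conclude
  exact combo e ⟨ke, hke⟩ he A B C'
    (fun i hi => ⟨by rw [hA2]; simp [ha i hi], by rw [hB2]; simp [hb i hi],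
      by rw [hC2]; simp [hc i hi]⟩)
    ⟨by rw [hA2]; simp [ha0], by rw [hB2]; simp [hb0], by rw [hC2]; simp [hc0]⟩
    hAeq hBeq hCeq hQ2
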